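/- Let (S₁, d₁) and (S₂, d₂) be metric spaces, (ξₙ) and ξ random elements of S₁ with ξₙ → ξ in distribution. Let F : S₁ → S₂ and Fₙ : S₁ → S₂ be measurable, and let C be a Borel subset of S₁ with P(ξ ∈ C) = 1 such that whenever sₙ → s in S₁ with s ∈ C, one has Fₙ(sₙ) → F(s) in S₂. Then Fₙ(ξₙ) → F(ξ) in distribution. -/

import Mathlib

open MeasureTheory Filter Topology BoundedContinuousFunction

/-!
The sequential hypothesis implies that `(n, t) ↦ Fn n t` tends to `F s` along `atTop ×ˢ 𝓝 s`
for `s ∈ C`: a bad sequence for that filter has a subsequence with strictly increasing indices,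
and padding it with `s` gives a full sequence converging to `s`.

By the portmanteau theorem it suffices to show `P(F ξ ∈ G) ≤ liminf P(Fₙ ξₙ ∈ G)` for open `G`.
Let `U k` be the interior of the set of points sent into `G` by every `Fₙ` with `n ≥ k`. The open
sets `U k` increase and cover `F ⁻¹' G ∩ C`, so `P(F ξ ∈ G) ≤ sup_k P(ξ ∈ U k)`, and for each `k`
`P(ξ ∈ U k) ≤ liminf P(ξₙ ∈ U k) ≤ liminf P(Fₙ ξₙ ∈ G)`.
-/

section ContinuousConvergence

variable {X Y : Type*} [TopologicalSpace X] [TopologicalSpace Y]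

lemma tendsto_extend_of_strictMono {φ : ℕ → ℕ} (hφ : StrictMono φ) {v : ℕ → X} {x : X}
    (hv : Tendsto v atTop (𝓝 x)) : Tendsto (Function.extend φ v fun _ ↦ x) atTop (𝓝 x) := by
  intro V hV
  obtain ⟨K, hK⟩ := eventually_atTop.1 (hv hV)
  refine eventually_atTop.2 ⟨φ K, fun n hn ↦ ?_⟩
  by_cases hn_range : ∃ k, φ k = n
  · obtain ⟨k, rfl⟩ := hn_range
    rw [hφ.injective.extend_apply]
    exact hK k (hφ.le_iff_le.1 hn)
  · rw [Function.extend_apply' _ _ _ hn_range]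
    exact mem_of_mem_nhds hV

variable {Fn : ℕ → X → Y} {x : X} {y : Y}

lemma tendsto_comp_strictMono_of_forall_tendsto
    (h : ∀ u : ℕ → X, Tendsto u atTop (𝓝 x) → Tendsto (fun n ↦ Fn n (u n)) atTop (𝓝 y))
    {φ : ℕ → ℕ} (hφ : StrictMono φ) {v : ℕ → X} (hv : Tendsto v atTop (𝓝 x)) :
    Tendsto (fun k ↦ Fn (φ k) (v k)) atTop (𝓝 y) := by
  have := (h _ (tendsto_extend_of_strictMono hφ hv)).comp hφ.tendsto_atTop
  simpa only [Function.comp_def, hφ.injective.extend_apply] using this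

lemma tendsto_prod_of_forall_tendsto [FirstCountableTopology X]
    (h : ∀ u : ℕ → X, Tendsto u atTop (𝓝 x) → Tendsto (fun n ↦ Fn n (u n)) atTop (𝓝 y)) :
    Tendsto (fun p : ℕ × X ↦ Fn p.1 p.2) (atTop ×ˢ 𝓝 x) (𝓝 y) := by
  rw [tendsto_def]
  intro V hV
  by_contra h_not
  obtain ⟨p, hp, hp_bad⟩ := exists_seq_forall_of_frequently (not_eventually.1 h_not)
  obtain ⟨hp₁, hp₂⟩ := tendsto_prod_iff'.1 hp
  obtain ⟨ψ, hψ, hpψ⟩ := strictMono_subseq_of_tendsto_atTop hp₁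
  have := tendsto_comp_strictMono_of_forall_tendsto h hpψ (hp₂.comp hψ.tendsto_atTop)
  obtain ⟨k, hk⟩ := (this.eventually_mem hV).exists
  exact hp_bad (ψ k) hk

lemma exists_mem_interior_setOf_forall_ge_of_eventually_prod {P : ℕ → X → Prop}
    (h : ∀ᶠ p in atTop ×ˢ 𝓝 x, P p.1 p.2) : ∃ k, x ∈ interior {t | ∀ n ≥ k, P n t} := by
  obtain ⟨⟨k, V⟩, ⟨-, hV⟩, hkV⟩ := (atTop_basis.prod (𝓝 x).basis_sets).eventually_iff.1 h
  exact ⟨k, mem_interior_iff_mem_nhds.2 <| mem_of_superset hV fun t ht n hn ↦ @hkV (n, t) ⟨hn, ht⟩⟩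

end ContinuousConvergence

namespace MeasureTheory.ProbabilityMeasure

variable {Ω X Y : Type*} [MeasurableSpace Ω] [MeasurableSpace X] [MeasurableSpace Y]

lemma map_map (P : ProbabilityMeasure Ω) {f : Ω → X} {g : X → Y} (hf : AEMeasurable f P)
    (hg : AEMeasurable g (P.map hf)) : (P.map hf).map hg = P.map (hg.comp_aemeasurable hf) :=
  Subtype.ext (hg.map_map_of_aemeasurable hf)

lemma tendsto_map_iff_forall_integral_tendsto [TopologicalSpace X] [OpensMeasurableSpace X]
    {ι : Type*} {L : Filter ι} (P : ProbabilityMeasure Ω) {ξ : ι → Ω → X} {ξlim : Ω → X}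
    (hξ : ∀ i, AEMeasurable (ξ i) P) (hξlim : AEMeasurable ξlim P) :
    Tendsto (fun i ↦ P.map (hξ i)) L (𝓝 (P.map hξlim)) ↔
      ∀ g : X →ᵇ ℝ, Tendsto (fun i ↦ ∫ ω, g (ξ i ω) ∂P) L (𝓝 (∫ ω, g (ξlim ω) ∂P)) := by
  have h_integral {f : Ω → X} (hf : AEMeasurable f P) (g : X →ᵇ ℝ) :
      ∫ x, g x ∂(P.map hf) = ∫ ω, g (f ω) ∂P :=
    integral_map hf g.continuous.aestronglyMeasurable
  simp only [tendsto_iff_forall_integral_tendsto, h_integral]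

variable [TopologicalSpace X] [OpensMeasurableSpace X] [HasOuterApproxClosed X]
  [TopologicalSpace Y] [OpensMeasurableSpace Y]
  {μ : ProbabilityMeasure X} {μs : ℕ → ProbabilityMeasure X} {F : X → Y} {Fn : ℕ → X → Y}

lemma measure_map_le_liminf_of_ae_tendsto_prod (hμs : Tendsto μs atTop (𝓝 μ))
    (hF : Measurable F) (hFn : ∀ n, Measurable (Fn n))
    (h_conv : ∀ᵐ x ∂(μ : Measure X),
      Tendsto (fun p : ℕ × X ↦ Fn p.1 p.2) (atTop ×ˢ 𝓝 x) (𝓝 (F x)))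
    {G : Set Y} (hG : IsOpen G) :
    (μ.map hF.aemeasurable : Measure Y) G ≤
      atTop.liminf fun n ↦ ((μs n).map (hFn n).aemeasurable : Measure Y) G := by
  set U : ℕ → Set X := fun k ↦ interior {t | ∀ n ≥ k, Fn n t ∈ G}
  have hU_mono : Monotone U := fun k l hkl ↦
    interior_mono fun t ht n hn ↦ ht n (hkl.trans hn)
  have h_cover : F ⁻¹' G ≤ᵐ[(μ : Measure X)] ⋃ k, U k := by
    filter_upwards [h_conv] with x hx hxG
    exact Set.mem_iUnion.2 <|
      exists_mem_interior_setOf_forall_ge_of_eventually_prod (hx.eventually_mem (hG.mem_nhds hxG))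
  calc (μ.map hF.aemeasurable : Measure Y) G
      = (μ : Measure X) (F ⁻¹' G) := map_apply' _ _ hG.measurableSet
    _ ≤ (μ : Measure X) (⋃ k, U k) := measure_mono_ae h_cover
    _ = ⨆ k, (μ : Measure X) (U k) := hU_mono.measure_iUnion
    _ ≤ _ := iSup_le fun k ↦ ?_
  refine (le_liminf_measure_open_of_tendsto hμs isOpen_interior).trans <|
    liminf_le_liminf <| (eventually_ge_atTop k).mono fun n hn ↦ ?_
  rw [map_apply' _ _ hG.measurableSet]
  exact measure_mono fun t ht ↦ interior_subset ht n hn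

theorem tendsto_map_of_ae_tendsto_prod (hμs : Tendsto μs atTop (𝓝 μ))
    (hF : Measurable F) (hFn : ∀ n, Measurable (Fn n))
    (h_conv : ∀ᵐ x ∂(μ : Measure X),
      Tendsto (fun p : ℕ × X ↦ Fn p.1 p.2) (atTop ×ˢ 𝓝 x) (𝓝 (F x))) :
    Tendsto (fun n ↦ (μs n).map (hFn n).aemeasurable) atTop (𝓝 (μ.map hF.aemeasurable)) :=
  tendsto_of_forall_isOpen_le_liminf' fun _ hG ↦
    measure_map_le_liminf_of_ae_tendsto_prod hμs hF hFn h_conv hG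

end MeasureTheory.ProbabilityMeasure

/-- Extended continuous mapping theorem (Kallenberg, Theorem 3.27). -/
theorem stmt_16 {Ω : Type*} [MeasurableSpace Ω] (μ : Measure Ω) [IsProbabilityMeasure μ]
    {S₁ S₂ : Type*} [MetricSpace S₁] [MeasurableSpace S₁] [BorelSpace S₁]
    [MetricSpace S₂] [MeasurableSpace S₂] [BorelSpace S₂]
    (ξ : ℕ → Ω → S₁) (ξlim : Ω → S₁)
    (hξmeas : ∀ n, Measurable (ξ n)) (hξlimmeas : Measurable ξlim)
    (hconv : ∀ g : S₁ →ᵇ ℝ,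
      Tendsto (fun n => ∫ ω, g (ξ n ω) ∂μ) atTop (𝓝 (∫ ω, g (ξlim ω) ∂μ)))
    (F : S₁ → S₂) (Fn : ℕ → S₁ → S₂)
    (hF : Measurable F) (hFn : ∀ n, Measurable (Fn n))
    (C : Set S₁) (hC : MeasurableSet C) (hμC : μ (ξlim ⁻¹' C) = 1)
    (hFconv : ∀ s ∈ C, ∀ u : ℕ → S₁, Tendsto u atTop (𝓝 s) →
      Tendsto (fun n => Fn n (u n)) atTop (𝓝 (F s))) :
    ∀ g : S₂ →ᵇ ℝ,
      Tendsto (fun n => ∫ ω, g (Fn n (ξ n ω)) ∂μ) atTop (𝓝 (∫ ω, g (F (ξlim ω)) ∂μ)) := by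
  let P : ProbabilityMeasure Ω := ⟨μ, inferInstance⟩
  have h_law := (P.tendsto_map_iff_forall_integral_tendsto (fun n ↦ (hξmeas n).aemeasurable)
    hξlimmeas.aemeasurable).2 hconv
  have h_mem_C : ∀ᵐ s ∂(P.map hξlimmeas.aemeasurable : Measure S₁), s ∈ C := by
    rw [ProbabilityMeasure.toMeasure_map, ae_map_iff hξlimmeas.aemeasurable (p := (· ∈ C)) hC]
    exact (prob_compl_eq_zero_iff (hξlimmeas hC)).2 hμC
  have h_image := ProbabilityMeasure.tendsto_map_of_ae_tendsto_prod h_law hF hFn <|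
    h_mem_C.mono fun s hs ↦ tendsto_prod_of_forall_tendsto (hFconv s hs)
  simp only [ProbabilityMeasure.map_map] at h_image
  exact (P.tendsto_map_iff_forall_integral_tendsto (fun n ↦ ((hFn n).comp (hξmeas n)).aemeasurable)
    (hF.comp hξlimmeas).aemeasurable).1 h_image
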